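/- arXiv:math/0102205 — 4 statements merged into one kernel-verified Lean document; each statement's English description precedes it below -/
import Mathlib

section
/- Let Q be a left N-invariant probability measure on a compact metric group G with bi-invariant metric, U Haar measure on G, and Qbar = Q * U_N. Then D(Qbar^{*k}, U) <= D(Q^{*k}, U) <= D(Qbar^{*(k-1)}, U) for all k >= 1. -/
open MeasureTheory
open scoped MeasureTheory

/-- The discrepancy distance between two measures on a metric space. -/
noncomputable def discrepancy {X : Type*} [MetricSpace X] [MeasurableSpace X]
    (P Q : Measure X) : ℝ :=
  ⨆ p : X × {r : ℝ // 0 ≤ r},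
    |(P (Metric.closedBall p.1 p.2)).toReal - (Q (Metric.closedBall p.1 p.2)).toReal|

/-- `k`-fold convolution power of a measure on a group. -/
noncomputable def convPow {G : Type*} [Monoid G] [MeasurableSpace G]
    (μ : Measure G) : ℕ → Measure G
  | 0 => Measure.dirac 1
  | k + 1 => (convPow μ k) ∗ₘ μ

/-!
Right convolution with a probability measure `ν` cannot increase the discrepancy to a measure `U`
with `U ∗ ν = U`: since the metric is right invariant, the preimage of a closed ball under a right
translation is again a closed ball, so `(P ∗ ν)(B) - U(B)` is a `ν`-average of differences
`P(B') - U(B')` over closed balls `B'`. A Haar probability measure is right invariant and hence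
absorbs every probability measure. Finally `U_N ∗ Q = Q` gives `Q̄^{*k} = Q^{*k} ∗ U_N` and
`Q^{*k} = Q̄^{*(k-1)} ∗ Q`.
-/

section Discrepancy

variable {X : Type*} [MetricSpace X] [MeasurableSpace X]

lemma discrepancy_le {P Q : Measure X} {c : ℝ} [Nonempty X]
    (h : ∀ (x : X) (r : ℝ), 0 ≤ r →
      |P.real (Metric.closedBall x r) - Q.real (Metric.closedBall x r)| ≤ c) :
    discrepancy P Q ≤ c :=
  ciSup_le fun ⟨x, r, hr⟩ => h x r hr

lemma abs_sub_le_discrepancy (P Q : Measure X) [IsProbabilityMeasure P] [IsProbabilityMeasure Q]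
    (x : X) {r : ℝ} (hr : 0 ≤ r) :
    |P.real (Metric.closedBall x r) - Q.real (Metric.closedBall x r)| ≤ discrepancy P Q := by
  refine le_ciSup (f := fun p : X × {r : ℝ // 0 ≤ r} =>
    |P.real (Metric.closedBall p.1 p.2) - Q.real (Metric.closedBall p.1 p.2)|) ⟨1, ?_⟩ (x, ⟨r, hr⟩)
  rintro _ ⟨p, rfl⟩
  exact abs_sub_le_iff.2 ⟨(sub_le_self _ measureReal_nonneg).trans measureReal_le_one,
    (sub_le_self _ measureReal_nonneg).trans measureReal_le_one⟩

end Discrepancy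

namespace MeasureTheory.Measure

variable {G : Type*} [Group G] [MeasurableSpace G] [MeasurableMul₂ G]

lemma mconv_apply (μ ν : Measure G) [SFinite μ] [SFinite ν] {s : Set G} (hs : MeasurableSet s) :
    (μ ∗ₘ ν) s = ∫⁻ y, μ ((· * y) ⁻¹' s) ∂ν := by
  rw [mconv, map_apply measurable_mul hs, prod_apply_symm (measurable_mul hs)]
  rfl

lemma mconv_real_apply (μ ν : Measure G) [IsFiniteMeasure μ] [SFinite ν] {s : Set G}
    (hs : MeasurableSet s) :
    (μ ∗ₘ ν).real s = ∫ y, μ.real ((· * y) ⁻¹' s) ∂ν := by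
  rw [measureReal_def, mconv_apply μ ν hs, ← integral_toReal]
  · rfl
  · exact (measurable_measure_mul_right μ hs).aemeasurable
  · exact ae_of_all _ fun _ => measure_lt_top _ _

lemma mconv_eq_self_of_isMulRightInvariant (U ν : Measure G) [SFinite U] [U.IsMulRightInvariant]
    [IsProbabilityMeasure ν] : U ∗ₘ ν = U := by
  ext s hs
  simp_rw [mconv_apply U ν hs, measure_preimage_mul_right, lintegral_const, measure_univ, mul_one]

lemma integrable_measureReal_preimage_mul_right (μ ν : Measure G) [IsFiniteMeasure μ]
    [IsFiniteMeasure ν] {s : Set G} (hs : MeasurableSet s) :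
    Integrable (fun y => μ.real ((· * y) ⁻¹' s)) ν :=
  .of_bound (measurable_measure_mul_right μ hs).ennreal_toReal.aestronglyMeasurable (μ.real .univ)
    (ae_of_all _ fun _ => by
      rw [Real.norm_of_nonneg measureReal_nonneg]
      exact measureReal_mono (Set.subset_univ _))

end MeasureTheory.Measure

lemma MeasureTheory.Measure.isMulRightInvariant_of_isProbabilityMeasure {G : Type*} [Group G]
    [TopologicalSpace G] [IsTopologicalGroup G] [LocallyCompactSpace G] [MeasurableSpace G]
    [BorelSpace G] (U : Measure G) [U.IsHaarMeasure] [IsProbabilityMeasure U] :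
    U.IsMulRightInvariant where
  map_mul_right_eq_self g :=
    have : IsProbabilityMeasure (U.map (· * g)) :=
      isProbabilityMeasure_map (measurable_mul_const g).aemeasurable
    isHaarMeasure_eq_of_isProbabilityMeasure _ _

lemma preimage_mul_right_closedBall_of_dist_mul_right {G : Type*} [Group G] [PseudoMetricSpace G]
    (hright : ∀ g x y : G, dist (x * g) (y * g) = dist x y) (x y : G) (r : ℝ) :
    (· * y) ⁻¹' Metric.closedBall x r = Metric.closedBall (x * y⁻¹) r := by
  ext z
  simp only [Set.mem_preimage, Metric.mem_closedBall, ← hright y z, inv_mul_cancel_right]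

lemma discrepancy_mconv_le {G : Type*} [Group G] [MetricSpace G] [MeasurableSpace G]
    [OpensMeasurableSpace G] [MeasurableMul₂ G]
    (hright : ∀ g x y : G, dist (x * g) (y * g) = dist x y)
    (P ν U : Measure G) [IsProbabilityMeasure P] [IsProbabilityMeasure ν]
    [IsProbabilityMeasure U] (hU : U ∗ₘ ν = U) :
    discrepancy (P ∗ₘ ν) U ≤ discrepancy P U := by
  refine discrepancy_le fun x r hr => ?_
  have hB : MeasurableSet (Metric.closedBall x r) := Metric.isClosed_closedBall.measurableSet
  have hUB : U.real (Metric.closedBall x r) =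
      ∫ y, U.real ((· * y) ⁻¹' Metric.closedBall x r) ∂ν := by
    rw [← Measure.mconv_real_apply U ν hB, hU]
  calc |(P ∗ₘ ν).real (Metric.closedBall x r) - U.real (Metric.closedBall x r)|
      = ‖∫ y, (P.real (Metric.closedBall (x * y⁻¹) r) -
          U.real (Metric.closedBall (x * y⁻¹) r)) ∂ν‖ := by
        rw [Measure.mconv_real_apply P ν hB, hUB, ← integral_sub, Real.norm_eq_abs]
        · simp_rw [preimage_mul_right_closedBall_of_dist_mul_right hright]
        all_goals exact Measure.integrable_measureReal_preimage_mul_right _ _ hB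
    _ ≤ discrepancy P U * ν.real Set.univ :=
        norm_integral_le_of_norm_le_const
          (ae_of_all _ fun y => abs_sub_le_discrepancy P U (x * y⁻¹) hr)
    _ = discrepancy P U := by rw [probReal_univ, mul_one]

section ConvPow

variable {G : Type*} [Monoid G] [MeasurableSpace G]

lemma convPow_succ (μ : Measure G) (k : ℕ) : convPow μ (k + 1) = convPow μ k ∗ₘ μ := rfl

variable [MeasurableMul₂ G]

instance sFinite_convPow (μ : Measure G) [SFinite μ] (k : ℕ) : SFinite (convPow μ k) := by
  induction k with
  | zero => rw [convPow]; infer_instance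
  | succ k _ => rw [convPow]; infer_instance

instance isProbabilityMeasure_convPow (μ : Measure G) [IsProbabilityMeasure μ] (k : ℕ) :
    IsProbabilityMeasure (convPow μ k) := by
  induction k with
  | zero => rw [convPow]; infer_instance
  | succ k _ => rw [convPow]; infer_instance

lemma convPow_one (μ : Measure G) [SFinite μ] : convPow μ 1 = μ :=
  Measure.dirac_one_mconv μ

variable {Q R : Measure G} [SFinite Q] [SFinite R]

lemma convPow_mconv_succ (hRQ : R ∗ₘ Q = Q) (k : ℕ) :
    convPow (Q ∗ₘ R) (k + 1) = convPow Q (k + 1) ∗ₘ R := by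
  induction k with
  | zero => rw [convPow_one, convPow_one]
  | succ k ih =>
    rw [convPow_succ, ih, Measure.mconv_assoc, ← Measure.mconv_assoc R, hRQ,
      ← Measure.mconv_assoc, ← convPow_succ]

lemma convPow_succ_eq_convPow_mconv (hRQ : R ∗ₘ Q = Q) (k : ℕ) :
    convPow Q (k + 1) = convPow (Q ∗ₘ R) k ∗ₘ Q := by
  cases k with
  | zero => rw [convPow_one, convPow, Measure.dirac_one_mconv]
  | succ k => rw [convPow_mconv_succ hRQ, Measure.mconv_assoc, hRQ, convPow_succ]

end ConvPow

theorem discrepancy_qbar_sandwich_general {G : Type*} [Group G] [MetricSpace G] [CompactSpace G]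
    [IsTopologicalGroup G] [MeasurableSpace G] [BorelSpace G]
    (hright : ∀ g x y : G, dist (x * g) (y * g) = dist x y)
    (N : Subgroup G)
    (μN : Measure N) [IsProbabilityMeasure μN]
    (Q : Measure G) [IsProbabilityMeasure Q]
    (UN : Measure G) (hUN : UN = μN.map (Subtype.val : N → G))
    (hQ : UN ∗ₘ Q = Q)
    (U : Measure G) [U.IsHaarMeasure] [IsProbabilityMeasure U]
    (k : ℕ) (hk : 1 ≤ k) :
    discrepancy (convPow (Q ∗ₘ UN) k) U ≤ discrepancy (convPow Q k) U ∧
    discrepancy (convPow Q k) U ≤ discrepancy (convPow (Q ∗ₘ UN) (k - 1)) U := by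
  have : IsProbabilityMeasure UN :=
    hUN ▸ Measure.isProbabilityMeasure_map measurable_subtype_coe.aemeasurable
  have := Measure.isMulRightInvariant_of_isProbabilityMeasure U
  obtain ⟨k, rfl⟩ := Nat.exists_eq_add_of_le' hk
  refine ⟨?_, ?_⟩
  · rw [convPow_mconv_succ hQ]
    exact discrepancy_mconv_le hright _ UN U (Measure.mconv_eq_self_of_isMulRightInvariant U UN)
  · rw [convPow_succ_eq_convPow_mconv hQ, Nat.add_sub_cancel]
    exact discrepancy_mconv_le hright _ Q U (Measure.mconv_eq_self_of_isMulRightInvariant U Q)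

/-- `D(Q̄^{*k}, U) ≤ D(Q^{*k}, U) ≤ D(Q̄^{*(k-1)}, U)`. -/
theorem discrepancy_qbar_sandwich {G : Type*} [Group G] [MetricSpace G] [CompactSpace G]
    [IsTopologicalGroup G] [MeasurableSpace G] [BorelSpace G]
    (hleft : ∀ g x y : G, dist (g * x) (g * y) = dist x y)
    (hright : ∀ g x y : G, dist (x * g) (y * g) = dist x y)
    (N : Subgroup G) (hN : IsClosed (N : Set G)) [CompactSpace N] [BorelSpace N]
    (μN : Measure N) [μN.IsHaarMeasure] [IsProbabilityMeasure μN]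
    (Q : Measure G) [IsProbabilityMeasure Q]
    (UN : Measure G) (hUN : UN = μN.map (Subtype.val : N → G))
    (hQ : UN ∗ₘ Q = Q)
    (U : Measure G) [U.IsHaarMeasure] [IsProbabilityMeasure U]
    (k : ℕ) (hk : 1 ≤ k) :
    discrepancy (convPow (Q ∗ₘ UN) k) U ≤ discrepancy (convPow Q k) U ∧
    discrepancy (convPow Q k) U ≤ discrepancy (convPow (Q ∗ₘ UN) (k - 1)) U :=
  discrepancy_qbar_sandwich_general hright N μN Q UN hUN hQ U k hk
end

section
/- For the n-th Legendre polynomial P_n and any real theta, |P_n(cos theta)|^2 <= 2 / (pi * n * sin^2 theta) for n >= 1 (with the convention that the bound is vacuous when sin theta = 0). -/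
open Polynomial Real

/-- The `n`-th Legendre polynomial via Rodrigues' formula. -/
noncomputable def legendreP (n : ℕ) : ℝ → ℝ := fun x =>
  ((1 : ℝ) / (2 ^ n * n.factorial)) *
    Polynomial.eval x (Polynomial.derivative^[n] ((Polynomial.X ^ 2 - 1) ^ n))

section Helpers
open Filter Topology
private lemma iterD_X_mul (p : ℝ[X]) (k : ℕ) :
    derivative^[k+1] (X * p) = X * derivative^[k+1] p + ((k:ℝ[X])+1) * derivative^[k] p := by
  induction k with
  | zero => simp [derivative_mul]; ring
  | succ k ih =>
    rw [show k+1+1 = (k+1)+1 from rfl, Function.iterate_succ_apply', ih]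
    simp only [derivative_add, derivative_mul, derivative_X, derivative_natCast, derivative_one,
      Nat.cast_ofNat, map_ofNat, Nat.cast_one, Nat.cast_zero, map_one, map_zero, pow_one,
      Function.iterate_succ_apply']
    push_cast
    ring
  termination_by k

private lemma iterD_sq_mul (p : ℝ[X]) (k : ℕ) :
    derivative^[k+2] ((X^2 - 1) * p) = (X^2 - 1) * derivative^[k+2] p
      + (2*(k:ℝ[X])+4) * X * derivative^[k+1] p + ((k:ℝ[X])+2)*((k:ℝ[X])+1) * derivative^[k] p := by
  induction k with
  | zero =>
    show derivative (derivative _) = _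
    simp only [derivative_mul, derivative_sub, derivative_one, derivative_X, derivative_X_pow,
      derivative_add, Nat.cast_ofNat, map_ofNat, Nat.cast_one, Nat.cast_zero, map_one, map_zero,
      pow_one, derivative_ofNat, show (2:ℕ)-1 = 1 from rfl, Function.iterate_succ_apply', Function.iterate_zero, id_eq]
    push_cast
    ring
  | succ k ih =>
    rw [show k+1+2 = (k+2)+1 from rfl, Function.iterate_succ_apply', ih]
    simp only [derivative_add, derivative_mul, derivative_sub, derivative_one, derivative_X,
      derivative_X_pow, derivative_natCast, derivative_ofNat, Nat.cast_ofNat, map_ofNat,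
      Nat.cast_one, Nat.cast_zero, map_one, map_zero, pow_one,
      Function.iterate_succ_apply']
    push_cast
    ring


private lemma legendre_ode (m : ℕ) :
    derivative ((X^2 - 1) * derivative^[m+2] (((X:ℝ[X])^2-1)^(m+1)))
      = (((m:ℝ[X])+1) * ((m:ℝ[X])+2)) * derivative^[m+1] (((X:ℝ[X])^2-1)^(m+1)) := by
  set R : ℝ[X] := ((X:ℝ[X])^2-1)^(m+1) with hR
  have key : (X^2 - 1) * derivative R = (2*(m:ℝ[X])+2) * (X * R) := by
    rw [hR, derivative_pow]
    simp only [derivative_sub, derivative_one, derivative_X_pow, Nat.cast_ofNat, map_ofNat,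
      Nat.cast_one, pow_one, sub_zero, Nat.add_sub_cancel, Nat.cast_add, map_add, map_one,
      C_eq_natCast]
    have : ((X:ℝ[X])^2-1) * (((X:ℝ[X])^2-1)^m) = ((X:ℝ[X])^2-1)^(m+1) := by rw [pow_succ]; ring
    push_cast
    calc ((X:ℝ[X])^2 - 1) * (((m:ℝ[X]) + 1) * ((X:ℝ[X])^2-1)^m * (2*X^1))
        = (((X:ℝ[X])^2-1) * (((X:ℝ[X])^2-1)^m)) * (((m:ℝ[X])+1) * (2*X)) := by ring
      _ = (2*(m:ℝ[X])+2) * (X * ((X:ℝ[X])^2-1)^(m+1)) := by rw [this]; ring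
  have key2 := congrArg (fun q : ℝ[X] => derivative^[m+2] q) key
  rw [iterD_sq_mul (derivative R) m] at key2
  have hconst : ∀ q : ℝ[X], derivative^[m+2] ((2*(m:ℝ[X])+2) * q) = (2*(m:ℝ[X])+2) * derivative^[m+2] q := by
    intro q
    have : (2*(m:ℝ[X])+2) = ((2*m+2 : ℕ) : ℝ[X]) := by push_cast; ring
    rw [this, iterate_derivative_natCast_mul]
  rw [hconst, iterD_X_mul R (m+1)] at key2
  simp only [← Function.iterate_succ_apply derivative, show m+1+1 = m+2 from rfl,
    show m+2+1 = m+3 from rfl, show m+0+1 = m+1 from rfl, Nat.cast_add, Nat.cast_one] at key2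
  rw [derivative_mul]
  simp only [derivative_sub, derivative_one, derivative_X_pow, Nat.cast_ofNat, map_ofNat, pow_one,
    sub_zero, ← Function.iterate_succ_apply' derivative, show m+2+1 = m+3 from rfl]
  linear_combination key2


noncomputable def cbin (m : ℕ) : ℝ := (Nat.centralBinom m : ℝ) / 4 ^ m

lemma cbin_pos (m : ℕ) : 0 < cbin m :=
  div_pos (by exact_mod_cast Nat.centralBinom_pos m) (by positivity)

lemma cbin_succ (m : ℕ) : cbin (m+1) = cbin m * (2*m+1) / (2*m+2) := by
  have h := Nat.succ_mul_centralBinom_succ m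
  have h' : ((m:ℝ)+1) * (Nat.centralBinom (m+1) : ℝ) = 2 * (2*m+1) * Nat.centralBinom m := by
    exact_mod_cast congrArg (fun x : ℕ => (x : ℝ)) h
  have hm : ((m:ℝ)+1) ≠ 0 := by positivity
  unfold cbin
  field_simp [cbin, pow_succ]
  linear_combination (2 * (4:ℝ)^m) * h'

lemma cbin_sq_eq (k : ℕ) : cbin k ^ 2 * (2*k+1) * Real.Wallis.W k = 1 := by
  rw [Real.Wallis.W_eq_factorial_ratio]
  have h1 : (Nat.centralBinom k : ℝ) = (2*k).factorial / (k.factorial * k.factorial) := by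
    rw [Nat.centralBinom, Nat.choose_eq_factorial_div_factorial (by omega)]
    rw [show 2*k - k = k by omega]
    rw [Nat.cast_div]
    · push_cast; ring
    · have := Nat.factorial_mul_factorial_dvd_factorial_add k k
      rwa [show k + k = 2*k by omega] at this
    · positivity
  rw [cbin, div_pow, h1]
  have hf : (0:ℝ) < (k.factorial : ℝ) := by exact_mod_cast k.factorial_pos
  have hf2 : (0:ℝ) < ((2*k).factorial : ℝ) := by exact_mod_cast (2*k).factorial_pos
  field_simp
  rw [show (2:ℝ)^(4*k) = 4^k * 4^k from by rw [← mul_pow, show (4:ℝ)*4 = 2^4 from by norm_num, ← pow_mul]]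
  ring

lemma cbin_mono (k : ℕ) : (k:ℝ) * cbin k ^ 2 ≤ ((k:ℕ)+1 : ℝ) * cbin (k+1) ^ 2 := by
  push_cast
  rw [cbin_succ]
  have hc := cbin_pos k
  rw [← sub_nonneg]
  have expand : ((k:ℝ)+1) * (cbin k * (2*(k:ℝ)+1) / (2*(k:ℝ)+2))^2 - (k:ℝ) * cbin k^2
      = cbin k^2 * ((k:ℝ)+1) / (2*(k:ℝ)+2)^2 := by
    field_simp
    ring
  rw [expand]
  positivity

lemma cbin_tendsto : Tendsto (fun k : ℕ => (k:ℝ) * cbin k ^ 2) atTop (𝓝 (1/Real.pi)) := by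
  have hW := Real.Wallis.tendsto_W_nhds_pi_div_two
  have h2 : Tendsto (fun k : ℕ => (Real.Wallis.W k)⁻¹) atTop (𝓝 ((Real.pi/2)⁻¹)) :=
    hW.inv₀ (by positivity)
  have h3 : Tendsto (fun k : ℕ => ((2:ℝ) + 1/k)⁻¹) atTop (𝓝 ((2:ℝ)⁻¹)) := by
    refine Tendsto.inv₀ ?_ (by norm_num)
    simpa using (tendsto_const_nhds (x := (2:ℝ))).add tendsto_one_div_atTop_nhds_zero_nat
  have h4 : Tendsto (fun k : ℕ => ((2:ℝ) + 1/k)⁻¹ * (Real.Wallis.W k)⁻¹) atTop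
      (𝓝 ((2:ℝ)⁻¹ * (Real.pi/2)⁻¹)) := h3.mul h2
  have heq : (fun k : ℕ => ((2:ℝ) + 1/k)⁻¹ * (Real.Wallis.W k)⁻¹)
      =ᶠ[atTop] (fun k : ℕ => (k:ℝ) * cbin k ^ 2) := by
    filter_upwards [eventually_ge_atTop 1] with k hk
    have hk0 : (0:ℝ) < k := by exact_mod_cast hk
    have hWk := Real.Wallis.W_pos k
    have hckey := cbin_sq_eq k
    have hc : cbin k ^ 2 = ((2*(k:ℝ)+1) * Real.Wallis.W k)⁻¹ := by
      have hpos : (2*(k:ℝ)+1) * Real.Wallis.W k ≠ 0 := by positivity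
      field_simp
      linear_combination hckey
    have h5 : ((2:ℝ)+1/k) = (2*k+1)/k := by field_simp
    rw [hc, h5, inv_div, mul_inv, div_eq_mul_inv]
    ring
  have : ((2:ℝ)⁻¹ * (Real.pi/2)⁻¹) = 1/Real.pi := by
    field_simp
  rw [← this]
  exact h4.congr' heq

lemma cbin_bound (k : ℕ) : (k:ℝ) * cbin k ^ 2 ≤ 1/Real.pi := by
  have hmono : Monotone (fun k : ℕ => (k:ℝ) * cbin k ^ 2) := by
    apply monotone_nat_of_le_succ
    intro k
    exact_mod_cast cbin_mono k
  exact hmono.ge_of_tendsto cbin_tendsto k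


private lemma pow_sq_sub_one_eq (n : ℕ) : ((X:ℝ[X])^2-1)^n
    = ∑ j ∈ Finset.range (n+1), C ((-1:ℝ)^(n-j) * (n.choose j : ℝ)) * X^(2*j) := by
  have h : ((X:ℝ[X])^2-1)^n = ((X:ℝ[X])^2 + (-1))^n := by ring_nf
  rw [h, add_pow]
  refine Finset.sum_congr rfl fun j hj => ?_
  rw [← pow_mul]
  have : ((-1 : ℝ[X])) ^ (n - j) = C ((-1:ℝ)^(n-j)) := by
    rw [map_pow, map_neg, map_one]
  rw [this]
  have : (C ((-1:ℝ)^(n-j) * (n.choose j : ℝ)) : ℝ[X]) = C ((-1:ℝ)^(n-j)) * C ((n.choose j : ℝ)) := by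
    rw [map_mul]
  rw [this, ← C_eq_natCast]
  ring

private lemma coeff_R_even (n k : ℕ) :
    ((((X:ℝ[X])^2-1)^n).coeff (2*k)) = (-1:ℝ)^(n-k) * (n.choose k : ℝ) := by
  rw [pow_sq_sub_one_eq, finset_sum_coeff]
  simp only [coeff_C_mul, coeff_X_pow]
  rcases le_or_gt k n with hk | hk
  · rw [Finset.sum_eq_single k]
    · simp
    · intro b _ hb
      rw [if_neg (by omega : ¬ (2*k = 2*b)), mul_zero]
    · intro h
      exact absurd (Finset.mem_range.mpr (by omega)) (fun c => h c)
  · rw [Finset.sum_eq_zero, Nat.choose_eq_zero_of_lt hk]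
    · simp
    · intro b hb
      have hb' := Finset.mem_range.mp hb
      rw [if_neg (by omega : ¬ (2*k = 2*b)), mul_zero]

private lemma coeff_R_odd (n k : ℕ) : ((((X:ℝ[X])^2-1)^n).coeff (2*k+1)) = 0 := by
  rw [pow_sq_sub_one_eq, finset_sum_coeff]
  apply Finset.sum_eq_zero
  intro b _
  simp only [coeff_C_mul, coeff_X_pow]
  rw [if_neg (by omega : ¬ (2*k+1 = 2*b)), mul_zero]

private lemma eval_zero_iterD (p : ℝ[X]) (k : ℕ) :
    eval 0 (Polynomial.derivative^[k] p) = (k.factorial : ℝ) * p.coeff k := by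
  rw [← coeff_zero_eq_eval_zero, coeff_iterate_derivative, zero_add, Nat.descFactorial_self,
    nsmul_eq_mul]

end Helpers

set_option maxHeartbeats 1000000 in
/-- Jackson's bound `|P_n(cos θ)|² ≤ 2/(π n sin² θ)`. -/
theorem legendre_cos_sq_le (n : ℕ) (hn : 1 ≤ n) (θ : ℝ) (hθ : Real.sin θ ≠ 0) :
    |legendreP n (Real.cos θ)| ^ 2 ≤ 2 / (Real.pi * n * Real.sin θ ^ 2) := by
  obtain ⟨m, rfl⟩ : ∃ m, n = m + 1 := ⟨n-1, by omega⟩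
  have hfac0 : (0:ℝ) < ((m+1).factorial : ℝ) := by exact_mod_cast (m+1).factorial_pos
  set R : ℝ[X] := ((X:ℝ[X])^2-1)^(m+1) with hR
  set a : ℝ := (1 : ℝ) / (2 ^ (m+1) * ((m+1).factorial : ℝ)) with ha
  have ha0 : 0 < a := by rw [ha]; positivity
  set L : ℝ[X] := C a * derivative^[m+1] R with hL
  have hLP : ∀ x : ℝ, legendreP (m+1) x = eval x L := by
    intro x; simp [legendreP, hL, hR, ha, eval_mul, eval_C]
  set c : ℝ := ((m:ℝ)+1) * ((m:ℝ)+2) with hc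
  have hc0 : 0 < c := by rw [hc]; positivity
  have hdL : derivative L = C a * derivative^[m+2] R := by
    rw [hL, derivative_C_mul, ← Function.iterate_succ_apply' derivative]
  have hCc : (C c : ℝ[X]) = ((m:ℝ[X])+1) * ((m:ℝ[X])+2) := by
    simp only [hc, map_mul, map_add, map_one, map_ofNat, C_eq_natCast]
  have hodeL : derivative ((X^2 - 1) * derivative L) = C c * L := by
    rw [hdL, hL]
    have h1 : ((X:ℝ[X])^2 - 1) * (C a * derivative^[m+2] R) =
        C a * (((X:ℝ[X])^2-1) * derivative^[m+2] R) := by ring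
    rw [h1, derivative_C_mul, hR, legendre_ode m, hCc]
    ring
  set Wq : ℝ[X] := C c * ((1 - X^2) * (L*L)) + ((1-X^2)*(1-X^2)) * (derivative L * derivative L)
    with hWq
  have hode' : 2*X*derivative L + (X^2-1) * derivative (derivative L) - C c * L = 0 := by
    have h2 := hodeL
    rw [derivative_mul] at h2
    simp only [derivative_sub, derivative_one, derivative_X_pow, Nat.cast_ofNat, map_ofNat,
      pow_one, sub_zero] at h2
    linear_combination h2
  have hWd : derivative Wq = (-(2:ℝ[X])) * C c * (X * (L*L)) := by
    rw [hWq]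
    simp only [derivative_add, derivative_mul, derivative_C_mul, derivative_sub, derivative_one,
      derivative_X_pow, derivative_X, derivative_C, Nat.cast_ofNat, map_ofNat, pow_one, sub_zero]
    linear_combination (-(2:ℝ[X])*(1-X^2)*derivative L) * hode'
  have evald : ∀ x : ℝ, deriv (fun y : ℝ => eval y Wq) x = -2 * c * x * (eval x L)^2 := by
    intro x
    rw [Polynomial.deriv, hWd]
    simp only [eval_mul, eval_C, eval_X, eval_neg, eval_ofNat]
    ring
  have hmax : ∀ x : ℝ, x ∈ Set.Icc (-1:ℝ) 1 → eval x Wq ≤ eval 0 Wq := by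
    intro x hx
    rcases le_total x 0 with h0 | h0
    · have hmono : MonotoneOn (fun y : ℝ => eval y Wq) (Set.Icc (-1:ℝ) 0) := by
        apply monotoneOn_of_deriv_nonneg (convex_Icc _ _) (Wq.continuous.continuousOn)
          (Wq.differentiable.differentiableOn)
        intro y hy
        rw [interior_Icc] at hy
        rw [evald]
        have hy0 : 0 ≤ -y := by linarith [hy.2]
        nlinarith [mul_nonneg (mul_nonneg hc0.le hy0) (sq_nonneg (eval y L))]
      exact hmono ⟨hx.1, h0⟩ ⟨by norm_num, le_refl (0:ℝ)⟩ h0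
    · have hanti : AntitoneOn (fun y : ℝ => eval y Wq) (Set.Icc (0:ℝ) 1) := by
        apply antitoneOn_of_deriv_nonpos (convex_Icc _ _) (Wq.continuous.continuousOn)
          (Wq.differentiable.differentiableOn)
        intro y hy
        rw [interior_Icc] at hy
        rw [evald]
        nlinarith [mul_nonneg (mul_nonneg hc0.le hy.1.le) (sq_nonneg (eval y L))]
      exact hanti ⟨le_refl (0:ℝ), by norm_num⟩ ⟨h0, hx.2⟩ h0
  have hW0 : eval 0 Wq = c * (eval 0 L)^2 + (eval 0 (derivative L))^2 := by
    rw [hWq]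
    simp only [eval_add, eval_mul, eval_C, eval_sub, eval_one, eval_pow, eval_X]
    ring
  have hL0 : eval 0 L = a * (((m+1).factorial : ℝ) * R.coeff (m+1)) := by
    rw [hL, eval_mul, eval_C, eval_zero_iterD]
  have hdL0 : eval 0 (derivative L) = a * (((m+2).factorial : ℝ) * R.coeff (m+2)) := by
    rw [hdL, eval_mul, eval_C, eval_zero_iterD]
  have hsign : ∀ (s : ℕ) (y : ℝ), ((-1:ℝ)^s * y)^2 = y^2 := by
    intro s y
    rw [mul_pow, ← pow_mul, mul_comm s 2, pow_mul, neg_one_sq, one_pow, one_mul]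
  have key0 : eval 0 Wq ≤ 2 * c / (Real.pi * (m+1)) := by
    have hπ := Real.pi_pos
    rcases Nat.even_or_odd (m+1) with ⟨t, ht⟩ | ⟨t, ht⟩
    · -- even: m+1 = 2t
      have ht2 : m + 1 = 2*t := by omega
      have ht1 : 1 ≤ t := by omega
      have haf : a * (((m+1).factorial : ℝ)) = ((2:ℝ)^(m+1))⁻¹ := by
        rw [ha]; field_simp
      have hcN : R.coeff (m+1) = (-1:ℝ)^((m+1)-t) * (((m+1).choose t : ℝ)) := by
        rw [hR, show m+1 = 2*t from ht2, coeff_R_even (2*t) t, show 2*t - t = t from by omega]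
      have hcN1 : R.coeff (m+2) = 0 := by
        rw [hR, show m+2 = 2*t+1 from by omega, coeff_R_odd]
      have hdL00 : eval 0 (derivative L) = 0 := by rw [hdL0, hcN1]; ring
      have h4 : (((m+1).choose t : ℕ) : ℝ) = (Nat.centralBinom t : ℝ) := by
        norm_cast
        rw [Nat.centralBinom_eq_two_mul_choose, ← ht2]
      have h4t : (4:ℝ)^t = 2^(m+1) := by
        rw [show (4:ℝ) = 2^2 from by norm_num, ← pow_mul, show 2*t = m+1 from by omega]
      have hL0sq : (eval 0 L)^2 = cbin t ^ 2 := by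
        rw [hL0, hcN,
          show a * (((m+1).factorial:ℝ) * ((-1:ℝ)^((m+1)-t) * (((m+1).choose t : ℕ):ℝ)))
            = (-1:ℝ)^((m+1)-t) * ((((m+1).choose t : ℕ):ℝ) * (a * ((m+1).factorial:ℝ))) from by
              ring, haf]
        rw [hsign ((m+1)-t) ((((m+1).choose t : ℕ):ℝ) * ((2:ℝ)^(m+1))⁻¹)]
        simp only [cbin, div_eq_mul_inv]
        rw [h4, h4t]
      rw [hW0, hdL00, hL0sq]
      have hb := cbin_bound t
      have hb' : Real.pi * ((t:ℝ) * cbin t^2) ≤ 1 := by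
        have h5 := mul_le_mul_of_nonneg_left hb hπ.le
        rwa [mul_one_div, div_self hπ.ne'] at h5
      rw [le_div_iff₀ (by positivity : (0:ℝ) < Real.pi * ((m:ℝ)+1))]
      have hm0 : (m:ℝ)+1 = 2*(t:ℝ) := by exact_mod_cast ht2
      rw [hm0]
      nlinarith [mul_le_mul_of_nonneg_left hb' (by positivity : (0:ℝ) ≤ 2*c), hc0.le]
    · -- odd: m+1 = 2t+1
      have ht2 : m + 1 = 2*t+1 := by omega
      have haf : a * (((m+1).factorial : ℝ)) = ((2:ℝ)^(m+1))⁻¹ := by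
        rw [ha]; field_simp
      have hcN : R.coeff (m+1) = 0 := by
        rw [hR, show m+1 = 2*t+1 from ht2]
        exact coeff_R_odd (2*t+1) t
      have hL00 : eval 0 L = 0 := by rw [hL0, hcN]; ring
      have hcN1 : R.coeff (m+2) = (-1:ℝ)^((m+1)-(t+1)) * (((m+1).choose (t+1) : ℕ):ℝ) := by
        rw [hR, show m+2 = 2*(t+1) from by omega, coeff_R_even (m+1) (t+1)]
      have hch : (Nat.centralBinom (t+1) : ℝ) = 2 * (((m+1).choose (t+1) : ℕ):ℝ) := by
        have hnat : Nat.centralBinom (t+1) = 2 * ((m+1).choose (t+1)) := by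
          rw [Nat.centralBinom_eq_two_mul_choose, show 2*(t+1) = (2*t+1)+1 from by ring,
            Nat.choose_succ_succ, show m+1 = 2*t+1 from ht2]
          have hsymm := Nat.choose_symm (show t+1 ≤ 2*t+1 by omega)
          rw [show 2*t+1 - (t+1) = t from by omega] at hsymm
          simp only [Nat.succ_eq_add_one]
          omega
        exact_mod_cast congrArg (fun z : ℕ => (z:ℝ)) hnat
      have hfs : ((m+2).factorial : ℝ) = ((m:ℝ)+2) * ((m+1).factorial : ℝ) := by
        rw [show m+2 = (m+1)+1 from rfl, Nat.factorial_succ]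
        push_cast
        ring
      have h4t : (4:ℝ)^(t+1) = 2 * 2^(m+1) := by
        rw [show (4:ℝ) = 2^2 from by norm_num, ← pow_mul, show 2*(t+1) = (m+1)+1 from by omega,
          pow_succ]
        ring
      have hdLsq : (eval 0 (derivative L))^2 = ((m:ℝ)+2)^2 * cbin (t+1)^2 := by
        rw [hdL0, hcN1, hfs,
          show a * ((((m:ℝ)+2) * ((m+1).factorial:ℝ)) * ((-1:ℝ)^((m+1)-(t+1)) * (((m+1).choose (t+1) : ℕ):ℝ)))
            = (-1:ℝ)^((m+1)-(t+1)) * (((m:ℝ)+2) * (((m+1).choose (t+1) : ℕ):ℝ) * (a * ((m+1).factorial:ℝ))) from by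
              ring, haf]

        rw [hsign ((m+1)-(t+1)) (((m:ℝ)+2) * (((m+1).choose (t+1) : ℕ):ℝ) * ((2:ℝ)^(m+1))⁻¹)]
        simp only [cbin]
        rw [show (((m+1).choose (t+1) : ℕ):ℝ) = (Nat.centralBinom (t+1) : ℝ)/2 from by
          rw [hch]; ring, h4t]
        have h2m : (0:ℝ) < (2:ℝ)^(m+1) := by positivity
        field_simp
      rw [hW0, hL00, hdLsq]
      have hb := cbin_bound (t+1)
      have hb' : Real.pi * (((t:ℝ)+1) * cbin (t+1)^2) ≤ 1 := by
        have h5 := mul_le_mul_of_nonneg_left hb hπ.le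
        push_cast at h5
        rwa [mul_one_div, div_self hπ.ne'] at h5
      rw [le_div_iff₀ (by positivity : (0:ℝ) < Real.pi * ((m:ℝ)+1))]
      have hm0 : (m:ℝ)+1 = 2*(t:ℝ)+1 := by exact_mod_cast ht2
      have hm1 : ((m:ℝ)+2) = 2*(t:ℝ)+2 := by
        have : (m:ℝ) = 2*(t:ℝ) := by exact_mod_cast (show m = 2*t by omega)
        rw [this]
      rw [hm0, hm1, hc, show ((m:ℝ)+1) * ((m:ℝ)+2) = (2*(t:ℝ)+1) * (2*(t:ℝ)+2) from by
        rw [hm1, hm0]]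
      nlinarith [mul_le_mul_of_nonneg_left hb' (by positivity : (0:ℝ) ≤ 4*((t:ℝ)+1)*(2*(t:ℝ)+1)),
        sq_nonneg (cbin (t+1))]
  have hxI : Real.cos θ ∈ Set.Icc (-1:ℝ) 1 := ⟨Real.neg_one_le_cos θ, Real.cos_le_one θ⟩
  set x : ℝ := Real.cos θ with hxdef
  have hπ := Real.pi_pos
  have hsin : Real.sin θ ^ 2 = 1 - x^2 := Real.sin_sq θ
  have hs0 : 0 < 1 - x^2 := by
    rw [← hsin]
    exact lt_of_le_of_ne (sq_nonneg _) (Ne.symm (pow_ne_zero 2 hθ))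
  have hlow : c * ((1-x^2) * (eval x L)^2) ≤ eval 0 Wq := by
    refine le_trans ?_ (hmax x hxI)
    have hevalx : eval x Wq = c * ((1-x^2)*(eval x L)^2)
        + ((1-x^2)*(1-x^2)) * (eval x (derivative L) * eval x (derivative L)) := by
      rw [hWq]
      simp only [eval_add, eval_mul, eval_C, eval_sub, eval_one, eval_pow, eval_X]
      ring
    rw [hevalx]
    nlinarith [mul_nonneg (mul_nonneg hs0.le hs0.le) (mul_self_nonneg (eval x (derivative L)))]
  have hmain : (1-x^2) * (eval x L)^2 ≤ 2/(Real.pi*((m:ℝ)+1)) := by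
    have h6 : c * ((1-x^2) * (eval x L)^2) ≤ c * (2/(Real.pi*((m:ℝ)+1))) := by
      refine le_trans (le_trans hlow key0) (le_of_eq ?_)
      ring
    exact (mul_le_mul_iff_right₀ hc0).mp h6
  rw [hLP, sq_abs, hsin, show ((m+1 : ℕ):ℝ) = (m:ℝ)+1 from by push_cast; ring]
  rw [le_div_iff₀ (by positivity : (0:ℝ) < Real.pi * ((m:ℝ)+1) * (1-x^2))]
  calc (eval x L)^2 * (Real.pi * ((m:ℝ)+1) * (1-x^2))
      = ((1-x^2) * (eval x L)^2) * (Real.pi * ((m:ℝ)+1)) := by ring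
    _ ≤ (2/(Real.pi*((m:ℝ)+1))) * (Real.pi * ((m:ℝ)+1)) :=
        mul_le_mul_of_nonneg_right hmain (by positivity)
    _ = 2 := div_mul_cancel₀ 2 (by positivity)
end

section
/- Let G be a compact metric group, nu a finite positive Borel measure on G, and f a bounded measurable function on G whose set of discontinuities is D_f. If x in G satisfies nu(x D_f^{-1}) = 0 where x D_f^{-1} = {x d^{-1} : d in D_f}, then the convolution h(x) = integral over G of f(z^{-1} x) dnu(z) is continuous at x. -/
/-! Dominated convergence: as `y → x`, the integrand `f (z⁻¹ * y)` tends to `f (z⁻¹ * x)` whenever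
`z⁻¹ * x` is a continuity point of `f`, that is, for every `z` outside `x D_f⁻¹`, a `ν`-null set;
and it is dominated by the constant `M`, which is integrable because `ν` is finite. -/

open MeasureTheory

theorem ae_continuousAt_inv_mul_of_measure_discontinuity_null {G Y : Type*} [Group G]
    [TopologicalSpace G] [TopologicalSpace Y] [MeasurableSpace G] {ν : Measure G} {f : G → Y}
    {x : G} (hx : ν ((fun d => x * d⁻¹) '' {y | ¬ ContinuousAt f y}) = 0) :
    ∀ᵐ z ∂ν, ContinuousAt f (z⁻¹ * x) := by
  refine measure_mono_null (fun z hz => ?_) hx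
  exact ⟨z⁻¹ * x, hz, by group⟩

theorem conv_continuousAt_general {G : Type*} [Group G] [MetricSpace G]
    [IsTopologicalGroup G] [MeasurableSpace G] [BorelSpace G]
    (ν : Measure G) [IsFiniteMeasure ν]
    (f : G → ℝ) (hf : Measurable f) (M : ℝ) (hbdd : ∀ g, |f g| ≤ M)
    (x : G)
    (hx : ν ((fun d => x * d⁻¹) '' {y | ¬ ContinuousAt f y}) = 0) :
    ContinuousAt (fun y => ∫ z, f (z⁻¹ * y) ∂ν) x := by
  refine continuousAt_of_dominated (bound := fun _ => M) ?_ ?_ (integrable_const M) ?_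
  · exact .of_forall fun y => (hf.comp (measurable_inv.mul_const y)).aestronglyMeasurable
  · exact .of_forall fun y => .of_forall fun z => hbdd (z⁻¹ * y)
  · filter_upwards [ae_continuousAt_inv_mul_of_measure_discontinuity_null hx] with z hz
    exact hz.comp (continuous_const_mul z⁻¹).continuousAt

/-- if `ν(x D_f⁻¹) = 0`, where `D_f` is the discontinuity set of
the bounded measurable function `f`, then `h(y) = ∫ f(z⁻¹ y) dν(z)` is
continuous at `x`. -/
theorem conv_continuousAt {G : Type*} [Group G] [MetricSpace G] [CompactSpace G]
    [IsTopologicalGroup G] [MeasurableSpace G] [BorelSpace G]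
    (ν : Measure G) [IsFiniteMeasure ν]
    (f : G → ℝ) (hf : Measurable f) (M : ℝ) (hbdd : ∀ g, |f g| ≤ M)
    (x : G)
    (hx : ν ((fun d => x * d⁻¹) '' {y | ¬ ContinuousAt f y}) = 0) :
    ContinuousAt (fun y => ∫ z, f (z⁻¹ * y) ∂ν) x :=
  conv_continuousAt_general ν f hf M hbdd x hx
end

section
/- For A with 0 < A^2 <= 0.9, one has (1/A) ∫_0^A e^{-t^2/2} dt, when squared and estimated by polar coordinates over the quarter disk, satisfies ((1/A)∫_0^A e^{-t^2/2} dt)^2 <= 1 - A^2/4. -/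
/-!
Bound the integrand by its alternating Taylor polynomial, `e^{-y} ≤ 1 - y + y²/2` with
`y = t²/2`, and integrate: the average of `e^{-t²/2}` over `[0, A]` is at most
`1 - A²/6 + A⁴/40`, whose square is at most `1 - A²/4` as long as `A² ≤ 9/10`.
-/

open Real intervalIntegral

namespace Real

/-- From `1 + y + y²/2 ≤ e^y` and `(1 - y + y²/2)(1 + y + y²/2) = 1 + y⁴/4 ≥ 1`. -/
theorem exp_neg_le_one_sub_add_sq_div_two {y : ℝ} (hy : 0 ≤ y) :
    exp (-y) ≤ 1 - y + y ^ 2 / 2 := by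
  have hpos : 0 < 1 + y + y ^ 2 / 2 := by positivity
  calc exp (-y) = (exp y)⁻¹ := exp_neg y
    _ ≤ (1 + y + y ^ 2 / 2)⁻¹ := inv_anti₀ hpos (quadratic_le_exp_of_nonneg hy)
    _ ≤ 1 - y + y ^ 2 / 2 := by
      rw [inv_le_iff_one_le_mul₀ hpos]
      nlinarith [sq_nonneg (y ^ 2)]

theorem integral_exp_neg_sq_div_two_le {A : ℝ} (hA : 0 ≤ A) :
    ∫ t in (0 : ℝ)..A, exp (-t ^ 2 / 2) ≤ A - A ^ 3 / 6 + A ^ 5 / 40 := by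
  calc ∫ t in (0 : ℝ)..A, exp (-t ^ 2 / 2)
      ≤ ∫ t in (0 : ℝ)..A, (1 - t ^ 2 / 2 + t ^ 4 / 8) := by
        refine integral_mono_on hA ((by fun_prop : Continuous _).intervalIntegrable _ _)
          ((by fun_prop : Continuous _).intervalIntegrable _ _) fun t _ => ?_
        have h := exp_neg_le_one_sub_add_sq_div_two (y := t ^ 2 / 2) (by positivity)
        rw [neg_div]
        linarith
    _ = A - A ^ 3 / 6 + A ^ 5 / 40 := by
        have hpow : ∀ n : ℕ, IntervalIntegrable (fun t : ℝ => t ^ n) MeasureTheory.volume 0 A :=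
          fun n => (continuous_pow n).intervalIntegrable _ _
        rw [integral_add (intervalIntegrable_const.sub ((hpow 2).div_const _))
            ((hpow 4).div_const _),
          integral_sub intervalIntegrable_const ((hpow 2).div_const _)]
        simp only [integral_const, integral_div, integral_pow]
        norm_num
        ring

end Real

theorem sq_one_sub_div_six_add_sq_div_forty_le {x : ℝ} (hx : 0 ≤ x) (hx' : x ≤ 9 / 10) :
    (1 - x / 6 + x ^ 2 / 40) ^ 2 ≤ 1 - x / 4 := by
  nlinarith [mul_nonneg hx (mul_nonneg hx hx), mul_nonneg hx (sub_nonneg.2 hx')]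

/-- for `0 < A` with `A² ≤ 0.9`,
`((1/A) ∫_0^A e^{-t²/2} dt)² ≤ 1 - A²/4`. -/
theorem gauss_integral_avg_sq_le (A : ℝ) (hA : 0 < A) (hA2 : A ^ 2 ≤ 9 / 10) :
    ((1 / A) * ∫ t in (0:ℝ)..A, Real.exp (-t ^ 2 / 2)) ^ 2 ≤ 1 - A ^ 2 / 4 := by
  have havg_nonneg : 0 ≤ (1 / A) * ∫ t in (0:ℝ)..A, Real.exp (-t ^ 2 / 2) :=
    mul_nonneg (by positivity) (integral_nonneg hA.le fun t _ => (exp_pos _).le)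
  have havg_le : (1 / A) * ∫ t in (0:ℝ)..A, Real.exp (-t ^ 2 / 2)
      ≤ 1 - A ^ 2 / 6 + (A ^ 2) ^ 2 / 40 := by
    rw [one_div, inv_mul_le_iff₀ hA]
    linarith [integral_exp_neg_sq_div_two_le hA.le]
  calc _ ≤ (1 - A ^ 2 / 6 + (A ^ 2) ^ 2 / 40) ^ 2 := pow_le_pow_left₀ havg_nonneg havg_le 2
    _ ≤ 1 - A ^ 2 / 4 := sq_one_sub_div_six_add_sq_div_forty_le (sq_nonneg A) hA2
end
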